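/- For every nonnegative integer L, ∑_{j=-L}^{L} χ(j+1) q^{j(j+1)} [2L choose L-j]_q = ∑_{j=-L-1}^{L+1} χ(j+1) q^{j(j+1)} [2L+1 choose L-j]_q, where χ(m) is the Jacobi symbol (m/3). -/
import Mathlib


open Finset

/-- The Gaussian (q-)binomial coefficient `[n choose k]_q` for `k : ℤ`
(equal to `0` when `k < 0` or `k > n`). -/
def qbinom {R : Type*} [CommRing R] (q : R) : ℕ → ℤ → R
  | 0, k => if k = 0 then 1 else 0
  | n + 1, k => qbinom q n (k - 1) + q ^ k.toNat * qbinom q n k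

/-- The Jacobi symbol `(m/3)`. -/
def chi (m : ℤ) : ℤ := if m % 3 = 1 then 1 else if m % 3 = 2 then -1 else 0

lemma qbinom_neg {R : Type*} [CommRing R] (q : R) : ∀ (n : ℕ) (k : ℤ), k < 0 → qbinom q n k = 0
  | 0, k, h => by simp only [qbinom]; rw [if_neg (by omega)]
  | n+1, k, h => by
      rw [qbinom, qbinom_neg q n (k-1) (by omega), qbinom_neg q n k h]; ring

lemma qbinom_gt {R : Type*} [CommRing R] (q : R) : ∀ (n : ℕ) (k : ℤ), (n:ℤ) < k → qbinom q n k = 0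
  | 0, k, h => by simp only [qbinom]; rw [if_neg (by omega)]
  | n+1, k, h => by
      rw [qbinom, qbinom_gt q n (k-1) (by push_cast at h ⊢; omega),
        qbinom_gt q n k (by push_cast at h ⊢; omega)]; ring

lemma qbinom_absorb {R : Type*} [CommRing R] (q : R) :
    ∀ (n : ℕ) (k : ℤ), (1 - q ^ k.toNat) * qbinom q n k
      = (1 - q ^ ((n:ℤ)+1-k).toNat) * qbinom q n (k-1)
  | 0, k => by
      rcases eq_or_ne k 0 with rfl | h0
      · simp [qbinom]
      rcases eq_or_ne k 1 with rfl | h1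
      · norm_num [qbinom]
      · simp only [qbinom]
        rw [if_neg h0, if_neg (by omega)]
        ring
  | n+1, k => by
      have d1 : qbinom q (n+1) k = qbinom q n (k-1) + q ^ k.toNat * qbinom q n k := rfl
      have d2 : qbinom q (n+1) (k-1) = qbinom q n (k-1-1) + q ^ (k-1).toNat * qbinom q n (k-1) := rfl
      have ih1 := qbinom_absorb q n k
      have ih2 := qbinom_absorb q n (k-1)
      rw [show ((n:ℤ)+1-(k-1)) = (n:ℤ)+1+1-k by ring] at ih2
      have key : q ^ k.toNat * (q ^ ((n:ℤ)+1-k).toNat * qbinom q n (k-1))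
          = q ^ ((n:ℤ)+1+1-k).toNat * (q ^ (k-1).toNat * qbinom q n (k-1)) := by
        rcases le_or_gt k 0 with hk | hk
        · rw [qbinom_neg q n (k-1) (by omega)]; ring
        rcases le_or_gt k ((n:ℤ)+1) with hk2 | hk2
        · rw [← mul_assoc, ← mul_assoc, ← pow_add, ← pow_add]
          congr 2
          omega
        · rw [qbinom_gt q n (k-1) (by omega)]; ring
      rw [d1, d2]
      push_cast
      linear_combination (q ^ k.toNat) * ih1 + ih2 - key

lemma qbinom_pascal' {R : Type*} [CommRing R] (q : R) (n : ℕ) (k : ℤ) :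
    qbinom q (n+1) k = q ^ ((n:ℤ)+1-k).toNat * qbinom q n (k-1) + qbinom q n k := by
  have d1 : qbinom q (n+1) k = qbinom q n (k-1) + q ^ k.toNat * qbinom q n k := rfl
  rw [d1]
  linear_combination -(qbinom_absorb q n k)

lemma qbinom_symm {R : Type*} [CommRing R] (q : R) :
    ∀ (n : ℕ) (k : ℤ), qbinom q n k = qbinom q n ((n:ℤ) - k)
  | 0, k => by
      simp only [qbinom, Nat.cast_zero, zero_sub]
      by_cases h : k = 0
      · simp [h]
      · rw [if_neg h, if_neg (by omega)]
  | n+1, k => by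
      rw [show qbinom q (n+1) k = qbinom q n (k-1) + q ^ k.toNat * qbinom q n k from rfl,
        qbinom_symm q n (k-1), qbinom_symm q n k,
        show ((n+1:ℕ):ℤ) - k = (n:ℤ)+1-k by push_cast; ring,
        qbinom_pascal' q n ((n:ℤ)+1-k),
        show (n:ℤ)+1-k-1 = (n:ℤ)-k by ring,
        show (n:ℤ)-(k-1) = (n:ℤ)+1-k by ring,
        show ((n:ℤ)+1-((n:ℤ)+1-k)) = k by ring]
      ring

lemma chi_neg' (m : ℤ) : chi (-m) = - chi m := by
  simp only [chi]; split_ifs <;> omega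

theorem stmt4 (L : ℕ) :
    ∑ j ∈ Icc (-(L : ℤ)) (L : ℤ),
        (chi (j + 1) : RatFunc ℚ) * (RatFunc.X : RatFunc ℚ) ^ (j * (j + 1))
          * qbinom (RatFunc.X : RatFunc ℚ) (2 * L) ((L : ℤ) - j)
      = ∑ j ∈ Icc (-(L : ℤ) - 1) ((L : ℤ) + 1),
          (chi (j + 1) : RatFunc ℚ) * (RatFunc.X : RatFunc ℚ) ^ (j * (j + 1))
            * qbinom (RatFunc.X : RatFunc ℚ) (2 * L + 1) ((L : ℤ) - j) := by
  have hq : (RatFunc.X : RatFunc ℚ) ≠ 0 := RatFunc.X_ne_zero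
  set q : RatFunc ℚ := RatFunc.X with hqdef
  -- Step 1: extend LHS sum to the large interval
  have h1 : ∑ j ∈ Icc (-(L : ℤ)) (L : ℤ),
        (chi (j + 1) : RatFunc ℚ) * q ^ (j * (j + 1)) * qbinom q (2 * L) ((L : ℤ) - j)
      = ∑ j ∈ Icc (-(L : ℤ) - 1) ((L : ℤ) + 1),
        (chi (j + 1) : RatFunc ℚ) * q ^ (j * (j + 1)) * qbinom q (2 * L) ((L : ℤ) - j) := by
    apply Finset.sum_subset (Icc_subset_Icc (by omega) (by omega))
    intro x hx hnx
    simp only [mem_Icc] at hx hnx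
    rcases (by omega : (L:ℤ) - x < 0 ∨ ((2*L : ℕ) : ℤ) < (L:ℤ) - x) with h | h
    · rw [qbinom_neg q (2*L) _ h, mul_zero]
    · rw [qbinom_gt q (2*L) _ h, mul_zero]
  rw [h1]
  -- Step 2: pointwise Pascal + absorption on the RHS summand
  have point : ∀ j : ℤ, (chi (j+1) : RatFunc ℚ) * q ^ (j*(j+1)) * qbinom q (2*L+1) ((L:ℤ)-j)
      = (chi (j+1) : RatFunc ℚ) * q ^ (j*(j+1)) * qbinom q (2*L) ((L:ℤ)-j)
        + (chi (j+1) : RatFunc ℚ) * q ^ (j*(j+1)) * q ^ ((L:ℤ)+1+j).toNat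
            * qbinom q (2*L) ((L:ℤ)-j-1) := by
    intro j
    have ab := qbinom_absorb q (2*L) ((L:ℤ)-j)
    rw [show ((2*L:ℕ):ℤ)+1-((L:ℤ)-j) = (L:ℤ)+1+j by push_cast; ring] at ab
    have pas : qbinom q (2*L+1) ((L:ℤ)-j)
        = qbinom q (2*L) ((L:ℤ)-j-1) + q ^ ((L:ℤ)-j).toNat * qbinom q (2*L) ((L:ℤ)-j) := rfl
    rw [pas]
    linear_combination (-((chi (j+1) : RatFunc ℚ) * q ^ (j*(j+1)))) * ab
  rw [Finset.sum_congr rfl (fun j _ => point j), Finset.sum_add_distrib, left_eq_add]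
  -- Step 3: the remainder sum vanishes
  have point2 : ∀ j ∈ Icc (-(L : ℤ) - 1) ((L : ℤ) + 1),
      (chi (j+1) : RatFunc ℚ) * q ^ (j*(j+1)) * q ^ ((L:ℤ)+1+j).toNat
          * qbinom q (2*L) ((L:ℤ)-j-1)
      = (chi (j+1) : RatFunc ℚ) * q ^ ((j+1)*(j+1) + (L:ℤ)) * qbinom q (2*L) ((L:ℤ)-(j+1)) := by
    intro j hj
    simp only [mem_Icc] at hj
    have hAB : q ^ (j*(j+1)) * q ^ ((L:ℤ)+1+j).toNat = q ^ ((j+1)*(j+1) + (L:ℤ)) := by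
      rw [← zpow_natCast q (((L:ℤ)+1+j).toNat), Int.toNat_of_nonneg (by omega), ← zpow_add₀ hq]
      congr 1
      ring
    rw [show (L:ℤ)-j-1 = (L:ℤ)-(j+1) by ring,
      mul_assoc ((chi (j+1) : RatFunc ℚ)) (q ^ (j*(j+1))) (q ^ ((L:ℤ)+1+j).toNat), hAB]
  rw [Finset.sum_congr rfl point2]
  -- reindex m = j + 1
  have h2 : ∑ j ∈ Icc (-(L : ℤ) - 1) ((L : ℤ) + 1),
        (chi (j+1) : RatFunc ℚ) * q ^ ((j+1)*(j+1) + (L:ℤ)) * qbinom q (2*L) ((L:ℤ)-(j+1))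
      = ∑ m ∈ Icc (-(L : ℤ)) ((L : ℤ) + 2),
        (chi m : RatFunc ℚ) * q ^ (m*m + (L:ℤ)) * qbinom q (2*L) ((L:ℤ)-m) := by
    rw [show Icc (-(L : ℤ)) ((L : ℤ) + 2)
        = Finset.map (addRightEmbedding (1:ℤ)) (Icc (-(L : ℤ) - 1) ((L : ℤ) + 1)) by
      rw [Finset.map_add_right_Icc]; congr 1 <;> ring]
    rw [Finset.sum_map]
    rfl
  rw [h2]
  -- shrink to Icc (-L) L
  have h3 : ∑ m ∈ Icc (-(L : ℤ)) ((L : ℤ) + 2),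
        (chi m : RatFunc ℚ) * q ^ (m*m + (L:ℤ)) * qbinom q (2*L) ((L:ℤ)-m)
      = ∑ m ∈ Icc (-(L : ℤ)) (L : ℤ),
        (chi m : RatFunc ℚ) * q ^ (m*m + (L:ℤ)) * qbinom q (2*L) ((L:ℤ)-m) := by
    rw [eq_comm]
    apply Finset.sum_subset (Icc_subset_Icc (by omega) (by omega))
    intro x hx hnx
    simp only [mem_Icc] at hx hnx
    rw [qbinom_neg q (2*L) _ (by omega), mul_zero]
  rw [h3]
  -- the sum is antisymmetric under m ↦ -m
  set T := ∑ m ∈ Icc (-(L : ℤ)) (L : ℤ),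
      (chi m : RatFunc ℚ) * q ^ (m*m + (L:ℤ)) * qbinom q (2*L) ((L:ℤ)-m) with hT
  have key : T = -T := by
    nth_rewrite 2 [hT]
    rw [← Finset.sum_neg_distrib]
    apply Finset.sum_equiv (Equiv.neg ℤ)
    · intro i; simp only [mem_Icc, Equiv.neg_apply]; omega
    · intro i hi
      simp only [Equiv.neg_apply]
      have hs := qbinom_symm q (2*L) ((L:ℤ) - i)
      rw [show ((2*L:ℕ):ℤ) - ((L:ℤ) - i) = (L:ℤ) - -i by push_cast; ring] at hs
      rw [← hs, show (-i)*(-i) = i*i by ring]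
      push_cast [chi_neg']
      ring
  have h2T : (2 : RatFunc ℚ) * T = 0 := by linear_combination key
  have h2 : (2 : RatFunc ℚ) ≠ 0 := by
    intro h
    have h2' : algebraMap (Polynomial ℚ) (RatFunc ℚ) 2 = algebraMap (Polynomial ℚ) (RatFunc ℚ) 0 := by
      rw [map_ofNat, map_zero]; exact h
    have := RatFunc.algebraMap_injective ℚ h2'
    norm_num at this
  rcases mul_eq_zero.mp h2T with h | h
  · exact absurd h h2
  · exact h
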